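/- Let F be a group, let G₁,…,G_k be finite irreducible F-groups such that G_i and G_j are not isomorphic as F-groups for i ≠ j, let m₁,…,m_k be non-negative integers, let R = ∏_{i=1}^k G_i^{m_i}, and let N be a positive integer. Then the number of N-tuples (x₁,…,x_N) ∈ R^N with [x₁,…,x_N]_F = R equals the product over i = 1,…,k of the number of N-tuples (y₁,…,y_N) ∈ (G_i^{m_i})^N with [y₁,…,y_N]_F = G_i^{m_i}. -/

import Mathlib

section FGroupDefs

variable (F : Type*) [Group F]

/-- A subgroup of an `F`-group is a *normal `F`-subgroup* if it is normal and
stable under the `F`-action. -/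
def IsNormalFSubgroup {G : Type*} [Group G] [MulDistribMulAction F G]
    (H : Subgroup G) : Prop :=
  H.Normal ∧ ∀ (f : F) (x : G), x ∈ H → f • x ∈ H

/-- An *irreducible `F`-group* is a nontrivial `F`-group whose only normal
`F`-subgroups are the trivial subgroup and the whole group. -/
def IsIrreducibleFGroup (G : Type*) [Group G] [MulDistribMulAction F G] : Prop :=
  Nontrivial G ∧ ∀ H : Subgroup G, IsNormalFSubgroup F H → H = ⊥ ∨ H = ⊤

/-- `[s]_F`: the smallest normal `F`-subgroup containing the set `s`. -/
def normalFClosure {G : Type*} [Group G] [MulDistribMulAction F G] (s : Set G) :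
    Subgroup G :=
  sInf {H : Subgroup G | IsNormalFSubgroup F H ∧ s ⊆ H}

/-- A group homomorphism is an `F`-group morphism if it commutes with the `F`-actions. -/
def IsFHom {G G' : Type*} [Group G] [Group G'] [MulDistribMulAction F G]
    [MulDistribMulAction F G'] (φ : G →* G') : Prop :=
  ∀ (f : F) (x : G), φ (f • x) = f • φ x

/-- `h_F(G)`: the number of `F`-group endomorphisms of `G`. -/
noncomputable def hF (G : Type*) [Group G] [MulDistribMulAction F G] : ℕ :=
  Nat.card {φ : G →* G // IsFHom F φ}

/-- Two `F`-groups are isomorphic if there is a bijective group homomorphism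
between them commuting with the `F`-actions. -/
def IsFIso (G G' : Type*) [Group G] [Group G'] [MulDistribMulAction F G]
    [MulDistribMulAction F G'] : Prop :=
  ∃ e : G ≃* G', ∀ (f : F) (x : G), e (f • x) = f • e x

end FGroupDefs

/-!
A tuple generates `R = ∏ᵢ Gᵢ^{mᵢ}` as a normal `F`-subgroup iff each of its block projections
generates `Gᵢ^{mᵢ}`, and then the count factors through `R^N ≃ ∏ᵢ (Gᵢ^{mᵢ})^N`. For the converse,
a proper normal `F`-subgroup with full projections lies in a maximal one `M`, and `R/M` is
irreducible. A block `Gⱼ^{mⱼ}` not contained in `M` maps onto `R/M`, hence so does one of its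
coordinate factors, which forces `Gⱼ ≅ R/M`. As the `Gᵢ` are pairwise non-isomorphic, only one
block `i` escapes `M`; so `M` contains the kernel of the projection to block `i` and projects onto
it, i.e. `M = R`.
-/

section NormalFSubgroup

variable {F : Type*} [Group F] {G G' : Type*} [Group G] [Group G']
  [MulDistribMulAction F G] [MulDistribMulAction F G']

theorem normalFClosure_eq_top_iff {s : Set G} :
    normalFClosure F s = ⊤ ↔ ∀ H : Subgroup G, IsNormalFSubgroup F H → s ⊆ H → H = ⊤ := by
  rw [normalFClosure, sInf_eq_top]
  exact ⟨fun h H hH hs => h H ⟨hH, hs⟩, fun h H hH => h H hH.1 hH.2⟩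

theorem IsFHom.comp {G'' : Type*} [Group G''] [MulDistribMulAction F G''] {ψ : G' →* G''}
    {φ : G →* G'} (hψ : IsFHom F ψ) (hφ : IsFHom F φ) : IsFHom F (ψ.comp φ) :=
  fun f x => by simp only [MonoidHom.comp_apply, hφ f x, hψ f]

theorem IsFIso.symm (h : IsFIso F G G') : IsFIso F G' G := by
  obtain ⟨e, he⟩ := h
  exact ⟨e.symm, fun f y => e.injective (by simp only [he, MulEquiv.apply_symm_apply])⟩

theorem IsFIso.trans {G'' : Type*} [Group G''] [MulDistribMulAction F G'']
    (h : IsFIso F G G') (h' : IsFIso F G' G'') : IsFIso F G G'' := by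
  obtain ⟨e, he⟩ := h
  obtain ⟨e', he'⟩ := h'
  exact ⟨e.trans e', fun f x => by simp only [MulEquiv.trans_apply, he, he']⟩

theorem IsNormalFSubgroup.comap {φ : G →* G'} (hφ : IsFHom F φ) {H : Subgroup G'}
    (hH : IsNormalFSubgroup F H) : IsNormalFSubgroup F (H.comap φ) :=
  ⟨hH.1.comap φ, fun f x hx => by
    rw [Subgroup.mem_comap, hφ]
    exact hH.2 f _ hx⟩

theorem IsNormalFSubgroup.map {φ : G →* G'} (hφ : IsFHom F φ) (hs : Function.Surjective φ)
    {H : Subgroup G} (hH : IsNormalFSubgroup F H) : IsNormalFSubgroup F (H.map φ) := by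
  refine ⟨hH.1.map φ hs, ?_⟩
  rintro f _ ⟨y, hy, rfl⟩
  exact ⟨f • y, hH.2 f y hy, hφ f y⟩

theorem isNormalFSubgroup_ker {φ : G →* G'} (hφ : IsFHom F φ) : IsNormalFSubgroup F φ.ker :=
  ⟨φ.normal_ker, fun f x hx => by rw [MonoidHom.mem_ker] at hx ⊢; rw [hφ, hx, smul_one]⟩

theorem normalFClosure_image_eq_top {φ : G →* G'} (hφ : IsFHom F φ)
    (hs : Function.Surjective φ) {s : Set G} (h : normalFClosure F s = ⊤) :
    normalFClosure F (φ '' s) = ⊤ := by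
  rw [normalFClosure_eq_top_iff] at h ⊢
  intro H hH hsH
  have hcomap : H.comap φ = ⊤ := h _ (hH.comap hφ) fun x hx => hsH ⟨x, hx, rfl⟩
  rw [← Subgroup.map_comap_eq_self_of_surjective hs H, hcomap, ← MonoidHom.range_eq_map,
    MonoidHom.range_eq_top.2 hs]

theorem isFIso_of_surjective (hG : IsIrreducibleFGroup F G) [Nontrivial G'] {φ : G →* G'}
    (hφ : IsFHom F φ) (hs : Function.Surjective φ) : IsFIso F G G' := by
  refine ⟨MulEquiv.ofBijective φ ⟨?_, hs⟩, hφ⟩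
  rcases hG.2 φ.ker (isNormalFSubgroup_ker hφ) with hker | hker
  · exact (MonoidHom.ker_eq_bot_iff φ).1 hker
  · rw [MonoidHom.ker_eq_top_iff] at hker
    obtain ⟨y, hy⟩ := exists_ne (1 : G')
    obtain ⟨x, rfl⟩ := hs y
    exact absurd (DFunLike.congr_fun hker x) hy

abbrev quotientMulDistribMulAction (M : Subgroup G) [M.Normal]
    (hM : ∀ (f : F), ∀ x ∈ M, f • x ∈ M) : MulDistribMulAction F (G ⧸ M) where
  smul f := QuotientGroup.map M M (MulDistribMulAction.toMonoidHom G f) (fun x hx => hM f x hx)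
  one_smul q := QuotientGroup.induction_on q fun x => congrArg QuotientGroup.mk (one_smul F x)
  mul_smul f g q := QuotientGroup.induction_on q fun x => congrArg QuotientGroup.mk (mul_smul f g x)
  smul_mul _ q r := map_mul _ q r
  smul_one _ := map_one _

theorem isFHom_mk' (M : Subgroup G) [M.Normal] (hM : ∀ (f : F), ∀ x ∈ M, f • x ∈ M) :
    letI := quotientMulDistribMulAction M hM
    IsFHom F (QuotientGroup.mk' M) :=
  fun _ _ => rfl

theorem IsIrreducibleFGroup.map_eq_top (hG' : IsIrreducibleFGroup F G') {φ : G →* G'}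
    (hφ : IsFHom F φ) (hs : Function.Surjective φ) {N : Subgroup G}
    (hN : IsNormalFSubgroup F N) (hNφ : ¬ N ≤ φ.ker) : N.map φ = ⊤ :=
  (hG'.2 _ (hN.map hφ hs)).resolve_left (mt (Subgroup.map_eq_bot_iff N).1 hNφ)

variable (F) in
def IsMaximalNormalFSubgroup (M : Subgroup G) : Prop :=
  IsNormalFSubgroup F M ∧ M ≠ ⊤ ∧ ∀ K : Subgroup G, IsNormalFSubgroup F K → M < K → K = ⊤

theorem exists_isMaximalNormalFSubgroup_le [Finite G] {H : Subgroup G}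
    (hH : IsNormalFSubgroup F H) (hne : H ≠ ⊤) :
    ∃ M, IsMaximalNormalFSubgroup F M ∧ H ≤ M := by
  let S : Set (Subgroup G) := {K | IsNormalFSubgroup F K ∧ K ≠ ⊤ ∧ H ≤ K}
  obtain ⟨M, ⟨hM, hMne, hHM⟩, hmax⟩ :=
    Set.Finite.exists_maximalFor id S (Set.toFinite S) ⟨H, hH, hne, le_rfl⟩
  refine ⟨M, ⟨hM, hMne, fun K hK hMK => ?_⟩, hHM⟩
  by_contra hKne
  exact hMK.not_ge (hmax ⟨hK, hKne, hHM.trans hMK.le⟩ hMK.le)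

theorem IsMaximalNormalFSubgroup.isIrreducibleFGroup_quotient {M : Subgroup G}
    (hM : IsMaximalNormalFSubgroup F M) :
    haveI := hM.1.1
    letI := quotientMulDistribMulAction M hM.1.2
    IsIrreducibleFGroup F (G ⧸ M) := by
  have := hM.1.1
  let := quotientMulDistribMulAction M hM.1.2
  refine ⟨QuotientGroup.nontrivial_iff.2 hM.2.1, fun K hK => ?_⟩
  have hs := QuotientGroup.mk'_surjective M
  have hMK : M ≤ K.comap (QuotientGroup.mk' M) := fun x hx => by
    rw [Subgroup.mem_comap, QuotientGroup.mk'_apply, (QuotientGroup.eq_one_iff x).2 hx]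
    exact K.one_mem
  rw [← Subgroup.map_comap_eq_self_of_surjective hs K]
  rcases hMK.eq_or_lt with h | h
  · left
    rw [← h]
    exact (Subgroup.map_eq_bot_iff M).2 (QuotientGroup.ker_mk' M).ge
  · right
    rw [hM.2.2 _ (hK.comap (isFHom_mk' M hM.1.2)) h, Subgroup.map_top_of_surjective _ hs]

end NormalFSubgroup

section Pi

variable {F : Type*} [Group F] {ι : Type*} {A : ι → Type*} [∀ i, Group (A i)]
  [∀ i, MulDistribMulAction F (A i)]

theorem isFHom_evalMonoidHom (i : ι) : IsFHom F (Pi.evalMonoidHom A i) :=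
  fun _ _ => rfl

variable [DecidableEq ι]

theorem isFHom_mulSingle (i : ι) : IsFHom F (MonoidHom.mulSingle A i) :=
  fun f a => (funext <| Pi.apply_mulSingle (fun _ => (f • ·)) (fun _ => smul_one f) i a).symm

theorem isNormalFSubgroup_range_mulSingle (i : ι) :
    IsNormalFSubgroup F (MonoidHom.mulSingle A i).range := by
  refine ⟨⟨?_⟩, ?_⟩
  · rintro _ ⟨a, rfl⟩ g
    refine ⟨g i * a * (g i)⁻¹, funext fun j => ?_⟩
    rcases eq_or_ne j i with rfl | hj
    · simp
    · simp [Pi.mulSingle_eq_of_ne hj]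
  · rintro f _ ⟨a, rfl⟩
    exact ⟨f • a, isFHom_mulSingle i f a⟩

theorem exists_range_mulSingle_not_le [Finite ι] {M : Subgroup (∀ i, A i)} (hM : M ≠ ⊤) :
    ∃ i, ¬ (MonoidHom.mulSingle A i).range ≤ M := by
  by_contra! h
  exact hM (eq_top_iff.2 fun x _ => Subgroup.pi_mem_of_mulSingle_mem x fun i => h i ⟨x i, rfl⟩)

end Pi

section Blocks

variable {F : Type*} [Group F]

theorem isFIso_of_surjective_pi {ι G B : Type*} [Finite ι] [Group G] [Group B]
    [MulDistribMulAction F G] [MulDistribMulAction F B] (hG : IsIrreducibleFGroup F G)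
    (hB : IsIrreducibleFGroup F B) {φ : (ι → G) →* B} (hφ : IsFHom F φ)
    (hs : Function.Surjective φ) : IsFIso F G B := by
  classical
  have := hB.1
  have hker : φ.ker ≠ ⊤ := fun h => by
    rw [MonoidHom.ker_eq_top_iff] at h
    obtain ⟨b, hb⟩ := exists_ne (1 : B)
    obtain ⟨x, rfl⟩ := hs b
    exact hb (DFunLike.congr_fun h x)
  obtain ⟨i, hi⟩ := exists_range_mulSingle_not_le hker
  refine isFIso_of_surjective hG (hφ.comp (isFHom_mulSingle (A := fun _ => G) i)) ?_
  rw [← MonoidHom.range_eq_top, MonoidHom.range_comp,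
    hB.map_eq_top hφ hs (isNormalFSubgroup_range_mulSingle i) hi]

theorem IsMaximalNormalFSubgroup.isFIso_quotient {ι G H : Type*} [Finite ι] [Group G] [Group H]
    [MulDistribMulAction F G] [MulDistribMulAction F H] {M : Subgroup G}
    (hM : IsMaximalNormalFSubgroup F M) (hH : IsIrreducibleFGroup F H) {φ : (ι → H) →* G}
    (hφ : IsFHom F φ) (hrange : IsNormalFSubgroup F φ.range) (hle : ¬ φ.range ≤ M) :
    haveI := hM.1.1
    letI := quotientMulDistribMulAction M hM.1.2
    IsFIso F H (G ⧸ M) := by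
  have := hM.1.1
  let := quotientMulDistribMulAction M hM.1.2
  have hmk := isFHom_mk' M hM.1.2
  have hs := QuotientGroup.mk'_surjective M
  refine isFIso_of_surjective_pi hH hM.isIrreducibleFGroup_quotient (hmk.comp hφ) ?_
  rw [← MonoidHom.range_eq_top, MonoidHom.range_comp,
    hM.isIrreducibleFGroup_quotient.map_eq_top hmk hs hrange (by rwa [QuotientGroup.ker_mk'])]

variable {ι : Type*} [Finite ι] {κ : ι → Type*} [∀ i, Finite (κ i)] {G : ι → Type*}
  [∀ i, Group (G i)] [∀ i, MulDistribMulAction F (G i)]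

theorem IsMaximalNormalFSubgroup.exists_ker_evalMonoidHom_le
    (hirr : ∀ i, IsIrreducibleFGroup F (G i))
    (hnoniso : ∀ i j, i ≠ j → ¬ IsFIso F (G i) (G j)) {M : Subgroup (∀ i, κ i → G i)}
    (hM : IsMaximalNormalFSubgroup F M) :
    ∃ i, (Pi.evalMonoidHom (fun i => κ i → G i) i).ker ≤ M := by
  classical
  have := hM.1.1
  let := quotientMulDistribMulAction M hM.1.2
  have hiso : ∀ i, ¬ (MonoidHom.mulSingle _ i).range ≤ M → IsFIso F (G i) (_ ⧸ M) :=
    fun i hi => hM.isFIso_quotient (hirr i) (isFHom_mulSingle i)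
      (isNormalFSubgroup_range_mulSingle i) hi
  obtain ⟨i, hi⟩ := exists_range_mulSingle_not_le hM.2.1
  refine ⟨i, fun r hr => Subgroup.pi_mem_of_mulSingle_mem r fun j => ?_⟩
  rcases eq_or_ne j i with rfl | hji
  · rw [show r j = 1 from hr, Pi.mulSingle_one]
    exact M.one_mem
  · by_contra hj
    exact hnoniso j i hji ((hiso j fun h => hj (h ⟨r j, rfl⟩)).trans (hiso i hi).symm)

theorem normalFClosure_eq_top_iff_forall_image_evalMonoidHom [∀ i, Finite (G i)]
    (hirr : ∀ i, IsIrreducibleFGroup F (G i))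
    (hnoniso : ∀ i j, i ≠ j → ¬ IsFIso F (G i) (G j)) {s : Set (∀ i, κ i → G i)} :
    normalFClosure F s = ⊤ ↔
      ∀ i, normalFClosure F (Pi.evalMonoidHom (fun i => κ i → G i) i '' s) = ⊤ := by
  refine ⟨fun h i => normalFClosure_image_eq_top (isFHom_evalMonoidHom i)
    (Function.surjective_eval i) h, fun h => ?_⟩
  rw [normalFClosure_eq_top_iff]
  intro H hH hsH
  by_contra hne
  obtain ⟨M, hM, hHM⟩ := exists_isMaximalNormalFSubgroup_le hH hne
  obtain ⟨i, hi⟩ := hM.exists_ker_evalMonoidHom_le hirr hnoniso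
  have hmap : M.map (Pi.evalMonoidHom _ i) = ⊤ :=
    normalFClosure_eq_top_iff.1 (h i) _
      (hM.1.map (isFHom_evalMonoidHom i) (Function.surjective_eval i))
      (Set.image_mono (hsH.trans hHM))
  apply hM.2.1
  rw [← sup_eq_left.2 hi, ← Subgroup.comap_map_eq, hmap, Subgroup.comap_top]

end Blocks

theorem count_tuples_prod_blocks_general
    {F : Type*} [Group F] {k : ℕ} (G : Fin k → Type*)
    [∀ i, Group (G i)] [∀ i, MulDistribMulAction F (G i)] [∀ i, Finite (G i)]
    (hirr : ∀ i, IsIrreducibleFGroup F (G i))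
    (hnoniso : ∀ i j, i ≠ j → ¬ IsFIso F (G i) (G j))
    (m : Fin k → ℕ) (N : ℕ) :
    Nat.card {x : Fin N → (∀ i, Fin (m i) → G i) //
        normalFClosure F (Set.range x) = ⊤} =
      ∏ i : Fin k, Nat.card {y : Fin N → (Fin (m i) → G i) //
        normalFClosure F (Set.range y) = ⊤} := by
  have key : ∀ x : Fin N → ∀ i, Fin (m i) → G i, normalFClosure F (Set.range x) = ⊤ ↔
      ∀ i, normalFClosure F (Set.range fun n => x n i) = ⊤ := fun x => by
    simpa only [← Set.range_comp, Function.comp_def, Pi.evalMonoidHom_apply] using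
      normalFClosure_eq_top_iff_forall_image_evalMonoidHom hirr hnoniso (s := Set.range x)
  let e : {x : Fin N → (∀ i, Fin (m i) → G i) // normalFClosure F (Set.range x) = ⊤} ≃
      ∀ i, {y : Fin N → (Fin (m i) → G i) // normalFClosure F (Set.range y) = ⊤} :=
    ((Equiv.piComm _).subtypeEquiv key).trans Equiv.subtypePiEquivPi
  rw [Nat.card_congr e, Nat.card_pi]

/-- the count of generating `N`-tuples of `R = ∏ᵢ Gᵢ^{mᵢ}` splits as a
product over the blocks. -/
theorem count_tuples_prod_blocks
    {F : Type*} [Group F] {k : ℕ} (G : Fin k → Type*)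
    [∀ i, Group (G i)] [∀ i, MulDistribMulAction F (G i)] [∀ i, Finite (G i)]
    (hirr : ∀ i, IsIrreducibleFGroup F (G i))
    (hnoniso : ∀ i j, i ≠ j → ¬ IsFIso F (G i) (G j))
    (m : Fin k → ℕ) (N : ℕ) (hN : 0 < N) :
    Nat.card {x : Fin N → (∀ i, Fin (m i) → G i) //
        normalFClosure F (Set.range x) = ⊤} =
      ∏ i : Fin k, Nat.card {y : Fin N → (Fin (m i) → G i) //
        normalFClosure F (Set.range y) = ⊤} :=
  count_tuples_prod_blocks_general G hirr hnoniso m N
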